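/- arXiv:1512.00056 — 7 statements merged into one kernel-verified Lean document; each statement's English description precedes it below -/
import Mathlib

section
/- Let F be a field, a, b, c, d ∈ F, and let t1, t2, t3 ∈ F be such that c·t_i + d ≠ 0 and −c·t_i + d ≠ 0 for i = 1,2,3. For each i define s_i⁺ := (a·t_i + b)/(c·t_i + d) and s_i⁻ := (−a·t_i + b)/(−c·t_i + d) (the images of ±t_i under the Möbius transformation t ↦ (at+b)/(ct+d)). Then the 3×3 determinant det [[1, 1, 1], [−s_1⁺s_1⁻, −s_2⁺s_2⁻, −s_3⁺s_3⁻], [s_1⁺+s_1⁻, s_2⁺+s_2⁻, s_3⁺+s_3⁻]] equals 0. -/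
noncomputable section

set_option maxHeartbeats 1000000

/-- The determinantal identity underlying the constraint on the translation vector:
for images `s_i⁺, s_i⁻` of `±t_i` under a fixed Möbius transformation
`t ↦ (at+b)/(ct+d)`, the matrix with columns `(1, −s_i⁺s_i⁻, s_i⁺+s_i⁻)` is singular. -/
theorem mobius_determinant_constraint {F : Type*} [Field F] (a b c d t1 t2 t3 : F)
    (h1 : c*t1 + d ≠ 0) (h1' : -(c*t1) + d ≠ 0)
    (h2 : c*t2 + d ≠ 0) (h2' : -(c*t2) + d ≠ 0)
    (h3 : c*t3 + d ≠ 0) (h3' : -(c*t3) + d ≠ 0) :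
    let sp : F → F := fun t => (a*t + b)/(c*t + d)
    let sm : F → F := fun t => (-(a*t) + b)/(-(c*t) + d)
    Matrix.det !![(1 : F), 1, 1;
                  -(sp t1 * sm t1), -(sp t2 * sm t2), -(sp t3 * sm t3);
                  sp t1 + sm t1, sp t2 + sm t2, sp t3 + sm t3] = 0 := by
  intro sp sm
  have mul : ∀ t : F, c*t+d ≠ 0 → -(c*t)+d ≠ 0 →
      -(sp t * sm t) = (a^2*t^2 - b^2) * (((c*t+d)*(-(c*t)+d)))⁻¹ := by
    intro t h h'
    simp only [sp, sm]
    rw [div_mul_div_comm, ← neg_div, div_eq_mul_inv, show -((a*t+b)*(-(a*t)+b)) = a^2*t^2-b^2 from by ring]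
  have add : ∀ t : F, c*t+d ≠ 0 → -(c*t)+d ≠ 0 →
      sp t + sm t = (2*b*d - 2*a*c*t^2) * (((c*t+d)*(-(c*t)+d)))⁻¹ := by
    intro t h h'
    simp only [sp, sm]
    rw [div_add_div _ _ h h', div_eq_mul_inv,
      show (a*t+b)*(-(c*t)+d) + (c*t+d)*(-(a*t)+b) = 2*b*d-2*a*c*t^2 from by ring]
  rw [Matrix.det_fin_three]
  simp only [Matrix.cons_val_zero, Matrix.cons_val_one, Matrix.head_cons,
    Matrix.cons_val_two, Matrix.tail_cons, Matrix.cons_val', Matrix.empty_val',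
    Matrix.cons_val_fin_one, Matrix.head_fin_const, Matrix.of_apply]
  rw [mul t1 h1 h1', mul t2 h2 h2', mul t3 h3 h3', add t1 h1 h1', add t2 h2 h2', add t3 h3 h3']
  have hE1 : ((c*t1+d)*(-(c*t1)+d)) * (((c*t1+d)*(-(c*t1)+d)))⁻¹ = 1 :=
    mul_inv_cancel₀ (mul_ne_zero h1 h1')
  have hE2 : ((c*t2+d)*(-(c*t2)+d)) * (((c*t2+d)*(-(c*t2)+d)))⁻¹ = 1 :=
    mul_inv_cancel₀ (mul_ne_zero h2 h2')
  have hE3 : ((c*t3+d)*(-(c*t3)+d)) * (((c*t3+d)*(-(c*t3)+d)))⁻¹ = 1 :=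
    mul_inv_cancel₀ (mul_ne_zero h3 h3')
  set e1 := (((c*t1+d)*(-(c*t1)+d)))⁻¹ with he1
  set e2 := (((c*t2+d)*(-(c*t2)+d)))⁻¹ with he2
  set e3 := (((c*t3+d)*(-(c*t3)+d)))⁻¹ with he3
  linear_combination
    (-(((a^2*t2^2-b^2)*(2*b*d-2*a*c*t3^2) - (a^2*t3^2-b^2)*(2*b*d-2*a*c*t2^2)) * e2 * e3)) * hE1 +
    (-(((a^2*t3^2-b^2)*(2*b*d-2*a*c*t1^2) - (a^2*t1^2-b^2)*(2*b*d-2*a*c*t3^2)) * e3 * e1)) * hE2 +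
    (-(((a^2*t1^2-b^2)*(2*b*d-2*a*c*t2^2) - (a^2*t2^2-b^2)*(2*b*d-2*a*c*t1^2)) * e1 * e2)) * hE3
end
end

section
/- Let (τ_n), n ∈ ℤ, be a sequence of nonzero elements of a field, let δ1, δ2, δ3 be nonzero elements of the field, and set α = 1/(δ2δ3), β = −1/(δ1δ3), γ = 1/(δ1δ2), λ = δ2²/δ1. Define P_n := τ_{n+1}τ_{n+2}/(δ3·τ_n·τ_{n+3}) and R_n := τ_{n+1}τ_{n+3}/(δ2·τ_n·τ_{n+4}). Then, for each fixed n, the relation (λ·P_n·R_{n+1} − λ·R_n·R_{n+1} − P_n)·R_{n+2} + 1 = 0 holds if and only if the Somos-6 relation τ_{n+6}τ_n = α·τ_{n+5}τ_{n+1} + β·τ_{n+4}τ_{n+2} + γ·τ_{n+3}² holds. -/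
noncomputable section

/-- Auxiliary single-fraction identity for the Somos-6 `P`/`R` relation. -/
lemma somos6_aux {K : Type*} [Field K] (d1 d2 d3 t0 t1 t2 t3 t4 t5 t6 : K)
    (h1 : d1 ≠ 0) (h2 : d2 ≠ 0) (h3 : d3 ≠ 0) (n0 : t0 ≠ 0) (n1 : t1 ≠ 0) (n2 : t2 ≠ 0)
    (n3 : t3 ≠ 0) (n4 : t4 ≠ 0) (n5 : t5 ≠ 0) (n6 : t6 ≠ 0) :
    (d2^2/d1 * (t1*t2/(d3*t0*t3)) * (t2*t4/(d2*t1*t5))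
     - d2^2/d1 * (t1*t3/(d2*t0*t4)) * (t2*t4/(d2*t1*t5))
     - t1*t2/(d3*t0*t3)) * (t3*t5/(d2*t2*t6)) + 1
    = (t6*t0 - (1/(d2*d3)*(t5*t1) + -(1/(d1*d3))*(t4*t2) + 1/(d1*d2)*t3^2)) / (t0*t6) := by
  simp only [div_mul_div_comm]
  rw [div_sub_div _ _ (by simp [mul_eq_zero, h1, h2, h3, n0, n1, n3, n5])
        (by simp [mul_eq_zero, h1, h2, n0, n1, n4, n5]),
      div_sub_div _ _ (by simp [mul_eq_zero, h1, h2, h3, n0, n1, n3, n4, n5])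
        (by simp [mul_eq_zero, h3, n0, n3]),
      div_mul_div_comm,
      div_add' _ _ _ (by simp [mul_eq_zero, h1, h2, h3, n0, n1, n2, n3, n4, n5, n6]),
      div_eq_div_iff (by simp [mul_eq_zero, h1, h2, h3, n0, n1, n2, n3, n4, n5, n6])
        (by simp [mul_eq_zero, n0, n6])]
  field_simp
  ring

/-- For `P_n = τ_{n+1}τ_{n+2}/(δ3τ_nτ_{n+3})`, `R_n = τ_{n+1}τ_{n+3}/(δ2τ_nτ_{n+4})`,
`λ = δ2²/δ1`, the relation `(λP_nR_{n+1} − λR_nR_{n+1} − P_n)R_{n+2} + 1 = 0` is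
equivalent to the Somos-6 relation with coefficients `α = 1/(δ2δ3)`, `β = −1/(δ1δ3)`,
`γ = 1/(δ1δ2)`. -/
theorem somos6_PR_relation {K : Type*} [Field K] (τ : ℤ → K) (δ1 δ2 δ3 : K)
    (hτ : ∀ n : ℤ, τ n ≠ 0) (h1 : δ1 ≠ 0) (h2 : δ2 ≠ 0) (h3 : δ3 ≠ 0) (n : ℤ) :
    let α : K := 1/(δ2*δ3)
    let β : K := -(1/(δ1*δ3))
    let γ : K := 1/(δ1*δ2)
    let lam : K := δ2^2/δ1
    let P : ℤ → K := fun m => τ (m+1) * τ (m+2) / (δ3 * τ m * τ (m+3))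
    let R : ℤ → K := fun m => τ (m+1) * τ (m+3) / (δ2 * τ m * τ (m+4))
    ((lam * P n * R (n+1) - lam * R n * R (n+1) - P n) * R (n+2) + 1 = 0
      ↔ τ (n+6) * τ n
        = α * (τ (n+5) * τ (n+1)) + β * (τ (n+4) * τ (n+2)) + γ * (τ (n+3))^2) := by
  intro α β γ lam P R
  have e1 : (n:ℤ)+1+1 = n+2 := by ring
  have e2 : (n:ℤ)+1+3 = n+4 := by ring
  have e3 : (n:ℤ)+1+4 = n+5 := by ring
  have e4 : (n:ℤ)+2+1 = n+3 := by ring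
  have e5 : (n:ℤ)+2+3 = n+5 := by ring
  have e6 : (n:ℤ)+2+4 = n+6 := by ring
  have h06 : τ n * τ (n+6) ≠ 0 := mul_ne_zero (hτ n) (hτ (n+6))
  have key : (lam * P n * R (n+1) - lam * R n * R (n+1) - P n) * R (n+2) + 1
      = (τ (n+6) * τ n - (α * (τ (n+5) * τ (n+1)) + β * (τ (n+4) * τ (n+2))
          + γ * (τ (n+3))^2)) / (τ n * τ (n+6)) := by
    simp only [P, R, α, β, γ, lam, e1, e2, e3, e4, e5, e6]
    exact somos6_aux δ1 δ2 δ3 (τ n) (τ (n+1)) (τ (n+2)) (τ (n+3)) (τ (n+4)) (τ (n+5))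
      (τ (n+6)) h1 h2 h3 (hτ n) (hτ (n+1)) (hτ (n+2)) (hτ (n+3)) (hτ (n+4)) (hτ (n+5))
      (hτ (n+6))
  rw [key, div_eq_zero_iff]
  simp [h06, sub_eq_zero]
end
end

section
/- Let (τ_n), n ∈ ℤ, be a sequence of nonzero elements of a field, let δ1, δ2, δ3 be nonzero elements of the field, and define T: ℤ³ → F by T(j,k,ℓ) := δ1^{kℓ}·δ2^{jℓ}·δ3^{jk}·τ_{j+2k+3ℓ} (integer exponents). Set α = 1/(δ2δ3), β = −1/(δ1δ3), γ = 1/(δ1δ2). Then, for each (j,k,ℓ) ∈ ℤ³ and n := j+2k+3ℓ, the discrete BKP relation T(j+1,k+1,ℓ+1)T(j,k,ℓ) − T(j+1,k,ℓ)T(j,k+1,ℓ+1) + T(j,k+1,ℓ)T(j+1,k,ℓ+1) − T(j,k,ℓ+1)T(j+1,k+1,ℓ) = 0 holds if and only if the Somos-6 relation τ_{n+6}τ_n = α·τ_{n+5}τ_{n+1} + β·τ_{n+4}τ_{n+2} + γ·τ_{n+3}² holds. -/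
/-!
With `δ1 δ2 δ3` nonzero, the gauge exponents `kℓ, jℓ, jk` are bilinear, so each of the four
products in the BKP relation carries the common factor
`δ1^(2kℓ+k+ℓ) δ2^(2jℓ+j+ℓ) δ3^(2jk+j+k)` times one extra `δ`-monomial: `δ1δ2δ3, δ1, δ2, δ3`
respectively. What remains after cancelling the common factor is the Somos-6 relation with
denominators cleared by `δ1δ2δ3`.
-/

section

variable {K : Type*} [Field K]

def discreteBKP (T : ℤ → ℤ → ℤ → K) (j k l : ℤ) : K :=
  T (j+1) (k+1) (l+1) * T j k l - T (j+1) k l * T j (k+1) (l+1)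
    + T j (k+1) l * T (j+1) k (l+1) - T j k (l+1) * T (j+1) (k+1) l

def somos6Reduction (δ1 δ2 δ3 : K) (τ : ℤ → K) (j k l : ℤ) : K :=
  δ1 ^ (k*l) * δ2 ^ (j*l) * δ3 ^ (j*k) * τ (j + 2*k + 3*l)

def somos6Defect (δ1 δ2 δ3 : K) (τ : ℤ → K) (n : ℤ) : K :=
  δ1 * δ2 * δ3 * (τ (n+6) * τ n) - δ1 * (τ (n+5) * τ (n+1))
    + δ2 * (τ (n+4) * τ (n+2)) - δ3 * τ (n+3) ^ 2

theorem discreteBKP_somos6Reduction {δ1 δ2 δ3 : K} (h1 : δ1 ≠ 0) (h2 : δ2 ≠ 0) (h3 : δ3 ≠ 0)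
    (τ : ℤ → K) (j k l : ℤ) :
    discreteBKP (somos6Reduction δ1 δ2 δ3 τ) j k l =
      δ1 ^ (2*k*l + k + l) * δ2 ^ (2*j*l + j + l) * δ3 ^ (2*j*k + j + k) *
        somos6Defect δ1 δ2 δ3 τ (j + 2*k + 3*l) := by
  simp only [discreteBKP, somos6Reduction, somos6Defect, two_mul, add_mul, mul_add, one_mul,
    mul_one, zpow_add₀ h1, zpow_add₀ h2, zpow_add₀ h3, zpow_one]
  ring_nf

theorem somos6_iff_somos6Defect_eq_zero {δ1 δ2 δ3 : K} (h1 : δ1 ≠ 0) (h2 : δ2 ≠ 0)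
    (h3 : δ3 ≠ 0) (τ : ℤ → K) (n : ℤ) :
    τ (n+6) * τ n = 1/(δ2*δ3) * (τ (n+5) * τ (n+1)) + -(1/(δ1*δ3)) * (τ (n+4) * τ (n+2))
        + 1/(δ1*δ2) * τ (n+3) ^ 2 ↔ somos6Defect δ1 δ2 δ3 τ n = 0 := by
  have clear_denominators : τ (n+6) * τ n - (1/(δ2*δ3) * (τ (n+5) * τ (n+1))
      + -(1/(δ1*δ3)) * (τ (n+4) * τ (n+2)) + 1/(δ1*δ2) * τ (n+3) ^ 2)
        = somos6Defect δ1 δ2 δ3 τ n / (δ1 * δ2 * δ3) := by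
    rw [somos6Defect]
    field_simp
    ring
  rw [← sub_eq_zero, clear_denominators, div_eq_zero_iff, or_iff_left (by simp [*])]
end

theorem somos6_from_discrete_BKP_general {K : Type*} [Field K] (τ : ℤ → K) (δ1 δ2 δ3 : K)
    (h1 : δ1 ≠ 0) (h2 : δ2 ≠ 0) (h3 : δ3 ≠ 0) (j k l : ℤ) :
    let T : ℤ → ℤ → ℤ → K := fun j k l =>
      δ1 ^ (k*l) * δ2 ^ (j*l) * δ3 ^ (j*k) * τ (j + 2*k + 3*l)
    let α : K := 1/(δ2*δ3)
    let β : K := -(1/(δ1*δ3))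
    let γ : K := 1/(δ1*δ2)
    let n : ℤ := j + 2*k + 3*l
    (T (j+1) (k+1) (l+1) * T j k l - T (j+1) k l * T j (k+1) (l+1)
        + T j (k+1) l * T (j+1) k (l+1) - T j k (l+1) * T (j+1) (k+1) l = 0
      ↔ τ (n+6) * τ n
        = α * (τ (n+5) * τ (n+1)) + β * (τ (n+4) * τ (n+2)) + γ * (τ (n+3))^2) := by
  intro T α β γ n
  change discreteBKP (somos6Reduction δ1 δ2 δ3 τ) j k l = 0 ↔ _
  rw [discreteBKP_somos6Reduction h1 h2 h3, somos6_iff_somos6Defect_eq_zero h1 h2 h3,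
    mul_eq_zero, or_iff_right
      (mul_ne_zero (mul_ne_zero (zpow_ne_zero _ h1) (zpow_ne_zero _ h2)) (zpow_ne_zero _ h3))]

/-- For the reduced tau function `T(j,k,ℓ) = δ1^{kℓ}δ2^{jℓ}δ3^{jk}τ_{j+2k+3ℓ}`, the
discrete BKP relation at `(j,k,ℓ)` is equivalent to the Somos-6 relation at
`n = j+2k+3ℓ` with coefficients `α = 1/(δ2δ3)`, `β = −1/(δ1δ3)`, `γ = 1/(δ1δ2)`. -/
theorem somos6_from_discrete_BKP {K : Type*} [Field K] (τ : ℤ → K) (δ1 δ2 δ3 : K)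
    (hτ : ∀ n : ℤ, τ n ≠ 0) (h1 : δ1 ≠ 0) (h2 : δ2 ≠ 0) (h3 : δ3 ≠ 0) (j k l : ℤ) :
    let T : ℤ → ℤ → ℤ → K := fun j k l =>
      δ1 ^ (k*l) * δ2 ^ (j*l) * δ3 ^ (j*k) * τ (j + 2*k + 3*l)
    let α : K := 1/(δ2*δ3)
    let β : K := -(1/(δ1*δ3))
    let γ : K := 1/(δ1*δ2)
    let n : ℤ := j + 2*k + 3*l
    (T (j+1) (k+1) (l+1) * T j k l - T (j+1) k l * T j (k+1) (l+1)
        + T j (k+1) l * T (j+1) k (l+1) - T j k (l+1) * T (j+1) (k+1) l = 0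
      ↔ τ (n+6) * τ n
        = α * (τ (n+5) * τ (n+1)) + β * (τ (n+4) * τ (n+2)) + γ * (τ (n+3))^2) :=
  somos6_from_discrete_BKP_general τ δ1 δ2 δ3 h1 h2 h3 j k l
end

section
/- Let (τ_n), n ∈ ℤ, be a sequence of nonzero elements of a field and let δ1, δ2, δ3 be nonzero elements of the field. Define P_n := τ_{n+1}τ_{n+2}/(δ3·τ_n·τ_{n+3}), Q_n := τ_{n+2}τ_{n+3}/(δ1·τ_n·τ_{n+5}), R_n := τ_{n+1}τ_{n+3}/(δ2·τ_n·τ_{n+4}), and set λ := δ2²/δ1, μ := δ2²/δ3³. Then for every n the identities Q_n = λ·R_n·R_{n+1} and P_n·P_{n+1}·P_{n+2} = μ·R_n·R_{n+1} hold; consequently, in the reduced coordinates (P_0,P_1,R_0,R_1) the shift n → n+1 takes the form P̃0 = P_1, P̃1 = μR_0R_1/(P_0P_1), R̃0 = R_1, and (when τ additionally satisfies the Somos-6 recurrence with coefficients α = 1/(δ2δ3), β = −1/(δ1δ3), γ = 1/(δ1δ2)) R̃1 = (P_0 + λR_0R_1 − λP_0R_1)⁻¹. -/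
noncomputable section

theorem aux1x {K : Type*} [Field K] (δ1 δ2 t0 t1 t2 t3 t4 t5 : K)
    (h1 : δ1 ≠ 0) (h2 : δ2 ≠ 0) (e0 : t0 ≠ 0) (e1 : t1 ≠ 0) (e4 : t4 ≠ 0) (e5 : t5 ≠ 0) :
    t2*t3/(δ1*t0*t5) = δ2^2/δ1 * (t1*t3/(δ2*t0*t4)) * (t2*t4/(δ2*t1*t5)) := by
  rw [div_mul_div_comm, div_mul_div_comm, div_eq_div_iff (by simp_all) (by simp_all)]
  ring

theorem aux2x {K : Type*} [Field K] (δ2 δ3 t0 t1 t2 t3 t4 t5 : K)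
    (h2 : δ2 ≠ 0) (h3 : δ3 ≠ 0) (e0 : t0 ≠ 0) (e1 : t1 ≠ 0) (e2 : t2 ≠ 0) (e3 : t3 ≠ 0)
    (e4 : t4 ≠ 0) (e5 : t5 ≠ 0) :
    (t1*t2/(δ3*t0*t3)) * (t2*t3/(δ3*t1*t4)) * (t3*t4/(δ3*t2*t5))
      = δ2^2/δ3^3 * ((t1*t3/(δ2*t0*t4)) * (t2*t4/(δ2*t1*t5))) := by
  rw [div_mul_div_comm, div_mul_div_comm, div_mul_div_comm, div_mul_div_comm,
    div_eq_div_iff (by simp_all) (by simp_all)]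
  ring

theorem aux4x {K : Type*} [Field K] (δ1 δ2 δ3 t0 t1 t2 t3 t4 t5 t6 : K)
    (h1 : δ1 ≠ 0) (h2 : δ2 ≠ 0) (h3 : δ3 ≠ 0) (e0 : t0 ≠ 0) (e1 : t1 ≠ 0) (e2 : t2 ≠ 0)
    (e3 : t3 ≠ 0) (e4 : t4 ≠ 0) (e5 : t5 ≠ 0) (e6 : t6 ≠ 0)
    (hC : δ1*δ2*δ3*(t6*t0) = δ1*(t5*t1) - δ2*(t4*t2) + δ3*t3^2) :
    t3*t5/(δ2*t2*t6)
      = ((t1*t2/(δ3*t0*t3)) + δ2^2/δ1 * (t1*t3/(δ2*t0*t4)) * (t2*t4/(δ2*t1*t5))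
        - δ2^2/δ1 * (t1*t2/(δ3*t0*t3)) * (t2*t4/(δ2*t1*t5)))⁻¹ := by
  have key : (t1*t2/(δ3*t0*t3)) + δ2^2/δ1 * (t1*t3/(δ2*t0*t4)) * (t2*t4/(δ2*t1*t5))
        - δ2^2/δ1 * (t1*t2/(δ3*t0*t3)) * (t2*t4/(δ2*t1*t5)) = δ2*t2*t6/(t3*t5) := by
    rw [div_mul_div_comm, div_mul_div_comm, div_mul_div_comm, div_mul_div_comm,
      div_add_div _ _ (by simp_all) (by simp_all),
      div_sub_div _ _ (by simp_all) (by simp_all),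
      div_eq_div_iff (by simp_all) (by simp_all)]
    linear_combination (-(δ1 * δ2^3 * δ3 * t0^2 * t1^2 * t2 * t3^2 * t4 * t5^2)) * hC
  rw [key, inv_div, div_eq_div_iff (by simp_all) (by simp_all)]

/-- For `P_n, Q_n, R_n` built from a nowhere-vanishing tau sequence and parameters
`λ = δ2²/δ1`, `μ = δ2²/δ3³`, the identities `Q_n = λR_nR_{n+1}` and
`P_nP_{n+1}P_{n+2} = μR_nR_{n+1}` hold for all `n`; consequently the shift takes the
reduced form, with `R_{n+2} = (P_n + λR_nR_{n+1} − λP_nR_{n+1})⁻¹` whenever `τ`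
satisfies the Somos-6 recurrence with `α = 1/(δ2δ3)`, `β = −1/(δ1δ3)`, `γ = 1/(δ1δ2)`. -/
theorem somos6_reduced_shift {K : Type*} [Field K] (τ : ℤ → K) (δ1 δ2 δ3 : K)
    (hτ : ∀ n : ℤ, τ n ≠ 0) (h1 : δ1 ≠ 0) (h2 : δ2 ≠ 0) (h3 : δ3 ≠ 0) :
    let P : ℤ → K := fun m => τ (m+1) * τ (m+2) / (δ3 * τ m * τ (m+3))
    let Q : ℤ → K := fun m => τ (m+2) * τ (m+3) / (δ1 * τ m * τ (m+5))
    let R : ℤ → K := fun m => τ (m+1) * τ (m+3) / (δ2 * τ m * τ (m+4))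
    let lam : K := δ2^2/δ1
    let mu : K := δ2^2/δ3^3
    let α : K := 1/(δ2*δ3)
    let β : K := -(1/(δ1*δ3))
    let γ : K := 1/(δ1*δ2)
    (∀ n : ℤ, Q n = lam * R n * R (n+1))
    ∧ (∀ n : ℤ, P n * P (n+1) * P (n+2) = mu * (R n * R (n+1)))
    ∧ (∀ n : ℤ, P (n+2) = mu * R n * R (n+1) / (P n * P (n+1)))
    ∧ ((∀ n : ℤ, τ (n+6) * τ n
          = α * (τ (n+5) * τ (n+1)) + β * (τ (n+4) * τ (n+2)) + γ * (τ (n+3))^2)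
        → ∀ n : ℤ, R (n+2) = (P n + lam * R n * R (n+1) - lam * P n * R (n+1))⁻¹) := by
  intro P Q R lam mu α β γ
  have hPne : ∀ n : ℤ, P n ≠ 0 := by
    intro n
    simp only [P]
    exact div_ne_zero (mul_ne_zero (hτ _) (hτ _))
      (mul_ne_zero (mul_ne_zero h3 (hτ _)) (hτ _))
  have hQ : ∀ n : ℤ, Q n = lam * R n * R (n+1) := by
    intro n
    simp only [P, Q, R, lam, show (n:ℤ)+1+1 = n+2 from by ring,
      show (n:ℤ)+1+2 = n+3 from by ring, show (n:ℤ)+1+3 = n+4 from by ring,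
      show (n:ℤ)+1+4 = n+5 from by ring]
    exact aux1x δ1 δ2 (τ n) (τ (n+1)) (τ (n+2)) (τ (n+3)) (τ (n+4)) (τ (n+5))
      h1 h2 (hτ _) (hτ _) (hτ _) (hτ _)
  have hP3 : ∀ n : ℤ, P n * P (n+1) * P (n+2) = mu * (R n * R (n+1)) := by
    intro n
    simp only [P, R, mu, show (n:ℤ)+1+1 = n+2 from by ring,
      show (n:ℤ)+1+2 = n+3 from by ring, show (n:ℤ)+1+3 = n+4 from by ring,
      show (n:ℤ)+1+4 = n+5 from by ring, show (n:ℤ)+2+1 = n+3 from by ring,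
      show (n:ℤ)+2+2 = n+4 from by ring, show (n:ℤ)+2+3 = n+5 from by ring]
    exact aux2x δ2 δ3 (τ n) (τ (n+1)) (τ (n+2)) (τ (n+3)) (τ (n+4)) (τ (n+5))
      h2 h3 (hτ _) (hτ _) (hτ _) (hτ _) (hτ _) (hτ _)
  refine ⟨hQ, hP3, ?_, ?_⟩
  · intro n
    rw [eq_div_iff (mul_ne_zero (hPne n) (hPne (n+1)))]
    rw [show P (n+2) * (P n * P (n+1)) = P n * P (n+1) * P (n+2) from by ring, hP3 n]
    ring
  · intro hS n
    have hS' := hS n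
    simp only [α, β, γ] at hS'
    have hC : δ1*δ2*δ3*(τ (n+6) * τ n)
        = δ1*(τ (n+5) * τ (n+1)) - δ2*(τ (n+4) * τ (n+2)) + δ3*(τ (n+3))^2 := by
      rw [hS']
      field_simp
      ring
    simp only [P, R, lam, show (n:ℤ)+1+1 = n+2 from by ring,
      show (n:ℤ)+1+2 = n+3 from by ring, show (n:ℤ)+1+3 = n+4 from by ring,
      show (n:ℤ)+1+4 = n+5 from by ring, show (n:ℤ)+2+1 = n+3 from by ring,
      show (n:ℤ)+2+3 = n+5 from by ring, show (n:ℤ)+2+4 = n+6 from by ring]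
    exact aux4x δ1 δ2 δ3 (τ n) (τ (n+1)) (τ (n+2)) (τ (n+3)) (τ (n+4)) (τ (n+5)) (τ (n+6))
      h1 h2 h3 (hτ _) (hτ _) (hτ _) (hτ _) (hτ _) (hτ _) (hτ _) hC

end
end

section
/- Let α, β, γ ∈ ℝ and consider the reduced Somos-6 map φ̂: (x0,x1,x2,x3) ↦ (x1,x2,x3,x4), where x4 := (α·x3·x2²·x1 + β·x2 + γ)/(x0·x1²·x2³·x3²), defined on the open set where x0x1x2x3 ≠ 0. Then the determinant of the 4×4 Jacobian matrix of partial derivatives of φ̂ equals (α·x3·x2²·x1 + β·x2 + γ)/(x0²·x1²·x2³·x3²) = (x1x2x3x4)/(x0x1x2x3); consequently φ̂ preserves the meromorphic volume form V̂ = (x0x1x2x3)⁻¹ dx0 ∧ dx1 ∧ dx2 ∧ dx3 for arbitrary values of α, β, γ. -/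
/-
The map only shifts coordinates and appends `x4`, so its Jacobian is a companion-type matrix;
expanding along the first column gives `det = -∂x4/∂x0`. Along the `x0`-line, `x4` is a constant
multiple of `x0⁻¹`, so `∂x4/∂x0 = -x4/x0` and `det = x4/x0 = (x1x2x3x4)/(x0x1x2x3)`.
-/

open Function

theorem Matrix.det_eq_of_rows_castSucc_eq_single {R : Type*} [CommRing R] {n : ℕ}
    (M : Matrix (Fin (n + 1)) (Fin (n + 1)) R)
    (hM : ∀ i : Fin n, M i.castSucc = Pi.single i.succ 1) :
    M.det = (-1) ^ n * M (Fin.last n) 0 := by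
  have hminor : M.submatrix Fin.castSucc Fin.succ = 1 := by
    ext i j
    simp [hM, Pi.single_apply, Matrix.one_apply, eq_comm]
  rw [det_succ_column_zero, Fintype.sum_eq_single (Fin.last n)]
  · simp [hminor]
  · intro i hi
    obtain ⟨k, rfl⟩ := Fin.exists_castSucc_eq.mpr hi
    simp [hM, Fin.succ_ne_zero]

theorem fderiv_apply_single_eq_deriv_update {𝕜 ι F : Type*} [NontriviallyNormedField 𝕜]
    [Fintype ι] [DecidableEq ι] [NormedAddCommGroup F] [NormedSpace 𝕜 F]
    {f : (ι → 𝕜) → F} {p : ι → 𝕜} (hf : DifferentiableAt 𝕜 f p) (i : ι) :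
    fderiv 𝕜 f p (Pi.single i 1) = deriv (fun t => f (update p i t)) (p i) := by
  have hf' : DifferentiableAt 𝕜 f (update p i (p i)) := by rwa [update_eq_self]
  simpa only [update_eq_self, comp_def] using
    (hf'.hasFDerivAt.comp_hasDerivAt (p i) (hasDerivAt_update p i (p i))).deriv.symm

theorem det_jacobian_snoc_shift {𝕜 : Type*} [NontriviallyNormedField 𝕜] {n : ℕ}
    (f : (Fin (n + 1) → 𝕜) → 𝕜) (p : Fin (n + 1) → 𝕜) :
    Matrix.det (Matrix.of fun i j : Fin (n + 1) =>
      fderiv 𝕜 (fun q => Fin.snoc (α := fun _ => 𝕜) (fun k : Fin n => q k.succ) (f q) i) p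
        (Pi.single j 1))
      = (-1) ^ n * fderiv 𝕜 f p (Pi.single 0 1) := by
  rw [Matrix.det_eq_of_rows_castSucc_eq_single]
  · simp
  · intro i
    ext j
    simp [fderiv_apply, Pi.single_apply, eq_comm]

noncomputable def reducedSomos6Next (α β γ : ℝ) (q : Fin 4 → ℝ) : ℝ :=
  (α * q 3 * (q 2)^2 * q 1 + β * q 2 + γ) / (q 0 * (q 1)^2 * (q 2)^3 * (q 3)^2)

theorem fderiv_reducedSomos6Next_apply_single_zero (α β γ : ℝ) {p : Fin 4 → ℝ}
    (hp : p 0 * (p 1)^2 * (p 2)^3 * (p 3)^2 ≠ 0) :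
    fderiv ℝ (reducedSomos6Next α β γ) p (Pi.single 0 1)
      = -(α * p 3 * (p 2)^2 * p 1 + β * p 2 + γ) / ((p 0)^2 * (p 1)^2 * (p 2)^3 * (p 3)^2) := by
  have hdiff : DifferentiableAt ℝ (reducedSomos6Next α β γ) p := by
    unfold reducedSomos6Next
    fun_prop (disch := exact hp)
  rw [fderiv_apply_single_eq_deriv_update hdiff]
  have hline : (fun t => reducedSomos6Next α β γ (update p 0 t)) = fun t =>
      (α * p 3 * (p 2)^2 * p 1 + β * p 2 + γ) / ((p 1)^2 * (p 2)^3 * (p 3)^2) * t⁻¹ := by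
    funext t
    simp only [reducedSomos6Next, update_self, ne_eq, Fin.reduceEq, not_false_eq_true,
      update_of_ne]
    ring
  rw [hline, deriv_const_mul_field, deriv_inv]
  ring

/-- The reduced Somos-6 map `φ̂ : (x0,x1,x2,x3) ↦ (x1,x2,x3,x4)` with
`x4 = (αx3x2²x1 + βx2 + γ)/(x0x1²x2³x3²)` has Jacobian determinant
`(αx3x2²x1 + βx2 + γ)/(x0²x1²x2³x3²) = (x1x2x3x4)/(x0x1x2x3)` at every point of the
open set `{x0x1x2x3 ≠ 0}`; consequently it preserves the meromorphic volume form
`V̂ = (x0x1x2x3)⁻¹ dx0∧dx1∧dx2∧dx3` for arbitrary `α, β, γ`. -/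
theorem reduced_somos6_jacobian (α β γ : ℝ) (p : Fin 4 → ℝ)
    (hp : p 0 * p 1 * p 2 * p 3 ≠ 0) :
    let φ : (Fin 4 → ℝ) → (Fin 4 → ℝ) := fun q =>
      ![q 1, q 2, q 3,
        (α * q 3 * (q 2)^2 * q 1 + β * q 2 + γ) / (q 0 * (q 1)^2 * (q 2)^3 * (q 3)^2)]
    let x4 : ℝ :=
      (α * p 3 * (p 2)^2 * p 1 + β * p 2 + γ) / (p 0 * (p 1)^2 * (p 2)^3 * (p 3)^2)
    Matrix.det (Matrix.of fun i j : Fin 4 => fderiv ℝ (fun q => φ q i) p (Pi.single j 1))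
        = (α * p 3 * (p 2)^2 * p 1 + β * p 2 + γ) / ((p 0)^2 * (p 1)^2 * (p 2)^3 * (p 3)^2)
    ∧ (α * p 3 * (p 2)^2 * p 1 + β * p 2 + γ) / ((p 0)^2 * (p 1)^2 * (p 2)^3 * (p 3)^2)
        = (p 1 * p 2 * p 3 * x4) / (p 0 * p 1 * p 2 * p 3) := by
  intro φ x4
  obtain ⟨⟨⟨h0, h1⟩, h2⟩, h3⟩ : ((p 0 ≠ 0 ∧ p 1 ≠ 0) ∧ p 2 ≠ 0) ∧ p 3 ≠ 0 := by
    simpa only [mul_ne_zero_iff] using hp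
  have hφ : φ = fun q => Fin.snoc (α := fun _ => ℝ) (fun k : Fin 3 => q k.succ)
      (reducedSomos6Next α β γ q) := by
    funext q i
    fin_cases i <;> rfl
  refine ⟨?_, by simp only [x4]; field_simp⟩
  have hden : p 0 * (p 1)^2 * (p 2)^3 * (p 3)^2 ≠ 0 := by simp [h0, h1, h2, h3]
  rw [hφ, det_jacobian_snoc_shift, fderiv_reducedSomos6Next_apply_single_zero α β γ hden]
  ring
end

section
/- In the field of rational functions in t over ℚ(λ,μ,K1,K2), setting u := (F̄2 − t²F2)/(t²F1 + F̄1), the hyperelliptic equation 𝒲² = R6(t) of the second genus-2 curve C′ is equivalent to its compact form: the identity R6(t)·(F2 + F1·u)³ = 32H³·[(K1+1)u³ + (3μ−3λ+K2)u² + (K1−3)u + λ − μ + K2 − t·(F2 + F1·u)·(u² − 1)] holds, where R6, F1, F2, F̄1, F̄2, H are defined below. -/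
/-! Write `u = N/D` with `N = F̄2 − t²F2` and `D = t²F1 + F̄1`. The `t²` terms cancel in
`F2·D + F1·N = 4H`, so `F2 + F1·u = 4H/D`, and multiplying the claim by `D³` turns it into the
polynomial identity `2·R6(t) = (K1+1)N³ + (3μ−3λ+K2)N²D + (K1−3)ND² + (λ−μ+K2)D³ − 4Ht(N² − D²)`:
`R6` is, up to the factor 2, the cubic of the compact form homogenized in `(N, D)`. Over
`ℚ(λ,μ,K1,K2,t)` the denominator `D` is nonzero, being `−1` at the origin. -/

noncomputable section

/-- The field `ℚ(λ,μ,K1,K2,t)` of rational functions in five indeterminates. -/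
abbrev F5 : Type := FractionRing (MvPolynomial (Fin 5) ℚ)

/-- The five generators `λ, μ, K1, K2, t` of `F5`. -/
def gen5 (i : Fin 5) : F5 :=
  algebraMap (MvPolynomial (Fin 5) ℚ) F5 (MvPolynomial.X i)

variable {K : Type*} [Field K]

/-- The sextic `R6(t)` defining the hyperelliptic form `𝒲² = R6(t)` of the second
genus-2 curve `C′`. -/
def R6 (lam mu k1 k2 t : K) : K :=
  let F1 := 2*lam + 1 + 2*mu + k1
  let F2 := 2 + lam - mu + k2
  let Fb1 := 2*lam - 1 + 2*mu - k1
  let Fb2 := -2 + lam - mu + k2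
  let H := (lam + mu)*F2 - F1
  let c6 := (lam + mu)*F2^3 - (2*lam - 2*mu + 1)*F1*F2^2 + (lam + mu + 2)*F1^2*F2 - F1^3
  let c0 := (lam + mu)*Fb2^3 - (2*lam - 2*mu - 1)*Fb1*Fb2^2 + (lam + mu - 2)*Fb1^2*Fb2 + Fb1^3
  let c5 := 2*H*(F1^2 - F2^2)
  let c3 := 4*H*(F1*Fb1 + F2*Fb2)
  let c1 := 2*H*(Fb1^2 - Fb2^2)
  let c4 := F1^3 - (mu + lam + 6)*F1^2*F2 - 8*(mu + lam - 1)*F1^2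
    + (6*lam - 6*mu + 1)*F1*F2^2 + 8*(mu^2 + 2*mu*lam + lam^2 + 4*mu - 1)*F2*F1
    - (mu + lam)*F2^3 + 8*(mu^2 - lam^2 + mu + lam)*F2^2
  let c2 := -Fb1^3 - (mu + lam - 6)*Fb2*Fb1^2 + 8*(mu + lam + 1)*Fb1^2
    + (6*lam - 6*mu - 1)*Fb1*Fb2^2 + 8*(mu^2 + 2*mu*lam + lam^2 - 4*mu - 1)*Fb1*Fb2
    - (mu + lam)*Fb2^3 + 8*(mu^2 - lam^2 - mu - lam)*Fb2^2
  c6*t^6 + c5*t^5 + c4*t^4 + c3*t^3 + c2*t^2 + c1*t + c0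

theorem two_mul_R6_eq_homogeneous_cubic (lam mu k1 k2 t : K) :
    let F1 := 2*lam + 1 + 2*mu + k1
    let F2 := 2 + lam - mu + k2
    let Fb1 := 2*lam - 1 + 2*mu - k1
    let Fb2 := -2 + lam - mu + k2
    let H := (lam + mu)*F2 - F1
    let N := Fb2 - t^2*F2
    let D := t^2*F1 + Fb1
    2 * R6 lam mu k1 k2 t = (k1 + 1)*N^3 + (3*mu - 3*lam + k2)*N^2*D + (k1 - 3)*N*D^2
      + (lam - mu + k2)*D^3 - 4*H*t*(N^2 - D^2) := by
  intro F1 F2 Fb1 Fb2 H N D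
  simp only [R6, F1, F2, Fb1, Fb2, H, N, D]
  ring

theorem R6_compact_form_of_ne_zero (lam mu k1 k2 t : K)
    (hD : t^2*(2*lam + 1 + 2*mu + k1) + (2*lam - 1 + 2*mu - k1) ≠ 0) :
    let F1 := 2*lam + 1 + 2*mu + k1
    let F2 := 2 + lam - mu + k2
    let Fb1 := 2*lam - 1 + 2*mu - k1
    let Fb2 := -2 + lam - mu + k2
    let H := (lam + mu)*F2 - F1
    let u := (Fb2 - t^2*F2) / (t^2*F1 + Fb1)
    R6 lam mu k1 k2 t * (F2 + F1*u)^3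
      = 32*H^3 * ((k1 + 1)*u^3 + (3*mu - 3*lam + k2)*u^2 + (k1 - 3)*u
          + lam - mu + k2 - t*(F2 + F1*u)*(u^2 - 1)) := by
  intro F1 F2 Fb1 Fb2 H u
  have hR6 : 2 * R6 lam mu k1 k2 t = (k1 + 1)*(Fb2 - t^2*F2)^3
      + (3*mu - 3*lam + k2)*(Fb2 - t^2*F2)^2*(t^2*F1 + Fb1)
      + (k1 - 3)*(Fb2 - t^2*F2)*(t^2*F1 + Fb1)^2 + (lam - mu + k2)*(t^2*F1 + Fb1)^3
      - 4*H*t*((Fb2 - t^2*F2)^2 - (t^2*F1 + Fb1)^2) :=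
    two_mul_R6_eq_homogeneous_cubic lam mu k1 k2 t
  have hG : F2*(t^2*F1 + Fb1) + F1*(Fb2 - t^2*F2) = 4*H := by
    simp only [F1, F2, Fb1, Fb2, H]
    ring
  replace hD : t^2*F1 + Fb1 ≠ 0 := hD
  unfold u
  generalize Fb2 - t^2*F2 = N at hR6 hG ⊢
  generalize t^2*F1 + Fb1 = D at hD hR6 hG ⊢
  have hF : F2 + F1*(N/D) = 4*H/D := by
    rw [eq_div_iff hD, ← hG]
    field_simp
  rw [hF]
  field_simp
  linear_combination 32*H^3*hR6

theorem gen5_denominator_ne_zero :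
    gen5 4^2*(2*gen5 0 + 1 + 2*gen5 1 + gen5 2) + (2*gen5 0 - 1 + 2*gen5 1 - gen5 2) ≠ 0 := by
  open MvPolynomial in
  have hp : gen5 4^2*(2*gen5 0 + 1 + 2*gen5 1 + gen5 2) + (2*gen5 0 - 1 + 2*gen5 1 - gen5 2)
      = algebraMap (MvPolynomial (Fin 5) ℚ) F5
          (X 4^2*(2*X 0 + 1 + 2*X 1 + X 2) + (2*X 0 - 1 + 2*X 1 - X 2)) := by
    simp only [gen5, map_add, map_mul, map_pow, map_sub, map_ofNat, map_one]
  rw [hp, Ne, map_eq_zero_iff _ (IsFractionRing.injective _ _)]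
  intro h
  simpa using congrArg (MvPolynomial.eval 0) h

/-- Compact form of the curve `C′`: with `u = (F̄2 − t²F2)/(t²F1 + F̄1)`, the identity
`R6(t)·(F2+F1u)³ = 32H³·[(K1+1)u³+(3μ−3λ+K2)u²+(K1−3)u+λ−μ+K2 − t(F2+F1u)(u²−1)]`
holds in the field of rational functions in `t` over `ℚ(λ,μ,K1,K2)`. -/
theorem R6_compact_form :
    let lam : F5 := gen5 0
    let mu : F5 := gen5 1
    let k1 : F5 := gen5 2
    let k2 : F5 := gen5 3
    let t : F5 := gen5 4
    let F1 : F5 := 2*lam + 1 + 2*mu + k1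
    let F2 : F5 := 2 + lam - mu + k2
    let Fb1 : F5 := 2*lam - 1 + 2*mu - k1
    let Fb2 : F5 := -2 + lam - mu + k2
    let H : F5 := (lam + mu)*F2 - F1
    let u : F5 := (Fb2 - t^2*F2) / (t^2*F1 + Fb1)
    R6 lam mu k1 k2 t * (F2 + F1*u)^3
      = 32*H^3 * ((k1 + 1)*u^3 + (3*mu - 3*lam + k2)*u^2 + (k1 - 3)*u
          + lam - mu + k2 - t*(F2 + F1*u)*(u^2 - 1)) :=
  R6_compact_form_of_ne_zero _ _ _ _ _ gen5_denominator_ne_zero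
end
end

section
/- Let F = ℚ(λ,μ,P0,P1,R0,R1) be the field of rational functions in six indeterminates, set R2 := (P0+λR0R1−λP0R1)⁻¹, and let M(x) := (1/R0)·[[−1, 1, 0], [−x/λ−1, 1, 1/λ], [0, (λP0R1R2+1)x, −P0R2]]. Then the matrix M(0) annihilates the vector (1,1,0)ᵀ, i.e. M(0)·(1,1,0)ᵀ = 0, and 0 is an eigenvalue of M(0) of algebraic multiplicity two: the characteristic polynomial satisfies det(t·I₃ − M(0)) = t²·(t + P0R2/R0). -/
noncomputable section

/-- The field `ℚ(λ,μ,P0,P1,R0,R1)` of rational functions in six indeterminates. -/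
abbrev F6 : Type := FractionRing (MvPolynomial (Fin 6) ℚ)

/-- The six generators `λ, μ, P0, P1, R0, R1` of `F6`. -/
def gen6 (i : Fin 6) : F6 :=
  algebraMap (MvPolynomial (Fin 6) ℚ) F6 (MvPolynomial.X i)

variable {K : Type*} [Field K]

/-- The matrix `M(x)` of the discrete Lax pair, where `R2 = (P0+λR0R1−λP0R1)⁻¹`. -/
def laxM (lam P0 R0 R1 x : K) : Matrix (Fin 3) (Fin 3) K :=
  let R2 := (P0 + lam*R0*R1 - lam*P0*R1)⁻¹
  (1/R0) • !![-1, 1, 0;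
              -x/lam - 1, 1, 1/lam;
              0, (lam*P0*R1*R2 + 1)*x, -(P0*R2)]

/-! At `x = 0` the matrix `M(x)` is block upper triangular: its upper-left block
`(1/R0) • !![-1, 1; -1, 1]` squares to zero and has `(1, 1)ᵀ` in its kernel, and its
lower-right entry is `-P0R2/R0`. -/

section BlockTriangular

open Matrix Polynomial

variable {R : Type*} [CommRing R]

theorem mulVec_one_one_zero_of_nilpotent_block (a b d : R) :
    !![-a, a, 0; -a, a, b; 0, 0, d] *ᵥ ![1, 1, 0] = 0 := by
  ext i
  fin_cases i <;> simp [mulVec]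

theorem charpoly_of_nilpotent_block (a b d : R) :
    (!![-a, a, 0; -a, a, b; 0, 0, d]).charpoly = X ^ 2 * (X - C d) := by
  rw [charpoly, det_fin_three]
  simp only [charmatrix_apply_eq, charmatrix_apply_ne, of_apply, cons_val', cons_val_zero,
    cons_val_one, cons_val, cons_val_fin_one, ne_eq, Fin.reduceEq, not_false_eq_true, map_zero,
    map_neg]
  ring

end BlockTriangular

theorem laxM_zero (lam P0 R0 R1 : K) :
    laxM lam P0 R0 R1 0 =
      !![-(1/R0), 1/R0, 0;
         -(1/R0), 1/R0, 1/lam/R0;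
         0, 0, -(P0*(P0 + lam*R0*R1 - lam*P0*R1)⁻¹/R0)] := by
  simp only [laxM, neg_zero, zero_div, zero_sub, mul_zero, mul_one, mul_neg, one_div_mul_eq_div,
    Matrix.smul_of, Matrix.smul_cons, smul_eq_mul, Matrix.smul_empty]

/-- `M(0)` annihilates `(1,1,0)ᵀ`, and `0` is an eigenvalue of `M(0)` of algebraic
multiplicity two: `det(t·I₃ − M(0)) = t²·(t + P0R2/R0)`. -/
theorem somos6_M0_kernel_and_charpoly :
    let lam : F6 := gen6 0
    let P0 : F6 := gen6 2
    let R0 : F6 := gen6 4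
    let R1 : F6 := gen6 5
    let R2 : F6 := (P0 + lam*R0*R1 - lam*P0*R1)⁻¹
    let M0 : Matrix (Fin 3) (Fin 3) F6 := laxM lam P0 R0 R1 0
    M0.mulVec ![1, 1, 0] = 0
    ∧ M0.charpoly = Polynomial.X^2 * (Polynomial.X + Polynomial.C (P0*R2/R0)) := by
  intro lam P0 R0 R1 R2 M0
  rw [show M0 = laxM lam P0 R0 R1 0 from rfl, laxM_zero, charpoly_of_nilpotent_block, map_neg,
    sub_neg_eq_add]
  exact ⟨mulVec_one_one_zero_of_nilpotent_block _ _ _, rfl⟩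
end
end
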